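/- arXiv:2305.08188 — 6 statements merged into one kernel-verified Lean document; each statement's English description precedes it below -/
import Mathlib

section
/- For every t = (ℓ₁,ℓ₂,m₁,m₂,n₁,n₂) in the lattice Λ, the SU(3) triple multiplicity c(t) equals the number of integers x satisfying g_j(t) ≤ x for all j ∈ {1,…,6} and x ≤ f_i(t) for all i ∈ {1,2,3}. -/
/-- A BZ triangle datum: coordinates `(y₁,y₂,y₃,z₁,z₂,z₃,z₄,z₅,z₆)` indexed `0,…,8`.
`IsBZ T` says all coordinates are nonnegative and `z₁−z₄ = z₅−z₂ = z₃−z₆`. -/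
def IsBZ (T : Fin 9 → ℤ) : Prop :=
  (∀ i, 0 ≤ T i) ∧ T 3 - T 6 = T 7 - T 4 ∧ T 7 - T 4 = T 5 - T 8

/-- projection to `(ℓ₁,ℓ₂,m₁,m₂,n₁,n₂)`. -/
def pr (T : Fin 9 → ℤ) : Fin 6 → ℤ :=
  ![T 1 + T 6, T 2 + T 7, T 2 + T 8, T 0 + T 3, T 0 + T 4, T 1 + T 5]

/-- the SU(3) triple multiplicity: number of BZ triangles lying over `t`. -/
noncomputable def c (t : Fin 6 → ℤ) : ℕ :=
  Nat.card {T : Fin 9 → ℤ // IsBZ T ∧ pr T = t}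

/-- membership in the lattice Λ : `ℓ₁+m₁+n₁ ≡ ℓ₂+m₂+n₂ (mod 3)`. -/
def inLattice (t : Fin 6 → ℤ) : Prop :=
  (t 0 + t 2 + t 4) ≡ (t 1 + t 3 + t 5) [ZMOD 3]

def ω (t : Fin 6 → ℚ) : ℚ := (t 0 + t 2 + t 4 - t 1 - t 3 - t 5) / 3

/-- the linear forms `f₁, f₂, f₃`. -/
def f : Fin 3 → (Fin 6 → ℚ) → ℚ :=
  ![fun _ => 0, fun t => t 0 - t 3 - ω t, fun t => t 1 - t 4 + ω t]

/-- the linear forms `g₁, …, g₆`. -/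
def g : Fin 6 → (Fin 6 → ℚ) → ℚ :=
  ![fun t => -t 3, fun t => -t 4, fun t => t 0 - t 3 - t 5 - ω t,
    fun t => -t 3 - ω t, fun t => -t 4 + ω t, fun t => t 1 - t 2 - t 4 + ω t]

def toQ (t : Fin 6 → ℤ) : Fin 6 → ℚ := fun i => (t i : ℚ)
theorem stmt0 (t : Fin 6 → ℤ) (ht : inLattice t) :
    c t = Nat.card {x : ℤ //
      (∀ j : Fin 6, g j (toQ t) ≤ (x : ℚ)) ∧ (∀ i : Fin 3, (x : ℚ) ≤ f i (toQ t))} := by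
  obtain ⟨w, hw⟩ : ∃ w : ℤ, t 0 + t 2 + t 4 - t 1 - t 3 - t 5 = 3 * w := by
    obtain ⟨k, hk⟩ := Int.ModEq.dvd ht
    exact ⟨-k, by omega⟩
  have hwq : (t 0 : ℚ) + t 2 + t 4 - t 1 - t 3 - t 5 = 3 * w := by exact_mod_cast hw
  have hω : ω (toQ t) = (w : ℚ) := by
    show ((t 0 : ℚ) + t 2 + t 4 - t 1 - t 3 - t 5) / 3 = (w : ℚ)
    rw [hwq]; ring
  have hpred : ∀ x : ℤ,
      ((∀ j : Fin 6, g j (toQ t) ≤ (x : ℚ)) ∧ (∀ i : Fin 3, (x : ℚ) ≤ f i (toQ t))) ↔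
      (-(t 3) ≤ x ∧ -(t 4) ≤ x ∧ t 0 - t 3 - t 5 - w ≤ x ∧ -(t 3) - w ≤ x ∧
        -(t 4) + w ≤ x ∧ t 1 - t 2 - t 4 + w ≤ x ∧
        x ≤ 0 ∧ x ≤ t 0 - t 3 - w ∧ x ≤ t 1 - t 4 + w) := by
    intro x
    constructor
    · rintro ⟨hg, hf⟩
      have h0 : -(t 3 : ℚ) ≤ x := hg 0
      have h1 : -(t 4 : ℚ) ≤ x := hg 1
      have h2 : (t 0 : ℚ) - t 3 - t 5 - ω (toQ t) ≤ x := hg 2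
      have h3 : -(t 3 : ℚ) - ω (toQ t) ≤ x := hg 3
      have h4 : -(t 4 : ℚ) + ω (toQ t) ≤ x := hg 4
      have h5 : (t 1 : ℚ) - t 2 - t 4 + ω (toQ t) ≤ x := hg 5
      have k0 : (x : ℚ) ≤ 0 := hf 0
      have k1 : (x : ℚ) ≤ (t 0 : ℚ) - t 3 - ω (toQ t) := hf 1
      have k2 : (x : ℚ) ≤ (t 1 : ℚ) - t 4 + ω (toQ t) := hf 2
      rw [hω] at h2 h3 h4 h5 k1 k2
      refine ⟨by exact_mod_cast h0, by exact_mod_cast h1, by exact_mod_cast h2,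
        by exact_mod_cast h3, by exact_mod_cast h4, by exact_mod_cast h5,
        by exact_mod_cast k0, by exact_mod_cast k1, by exact_mod_cast k2⟩
    · rintro ⟨h0, h1, h2, h3, h4, h5, k0, k1, k2⟩
      have h0' : (-(t 3 : ℤ) : ℚ) ≤ x := by exact_mod_cast h0
      have h1' : (-(t 4 : ℤ) : ℚ) ≤ x := by exact_mod_cast h1
      have h2' : ((t 0 - t 3 - t 5 - w : ℤ) : ℚ) ≤ x := by exact_mod_cast h2
      have h3' : ((-(t 3) - w : ℤ) : ℚ) ≤ x := by exact_mod_cast h3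
      have h4' : ((-(t 4) + w : ℤ) : ℚ) ≤ x := by exact_mod_cast h4
      have h5' : ((t 1 - t 2 - t 4 + w : ℤ) : ℚ) ≤ x := by exact_mod_cast h5
      have k0' : (x : ℚ) ≤ ((0 : ℤ) : ℚ) := by exact_mod_cast k0
      have k1' : (x : ℚ) ≤ ((t 0 - t 3 - w : ℤ) : ℚ) := by exact_mod_cast k1
      have k2' : (x : ℚ) ≤ ((t 1 - t 4 + w : ℤ) : ℚ) := by exact_mod_cast k2
      push_cast at h0' h1' h2' h3' h4' h5' k0' k1' k2'
      constructor
      · intro j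
        fin_cases j
        · show -(((t 3 : ℤ) : ℚ)) ≤ (x : ℚ); show -((t 3 : ℤ) : ℚ) ≤ (x : ℚ); linarith
        · show -(((t 4 : ℤ) : ℚ)) ≤ (x : ℚ); show -((t 4 : ℤ) : ℚ) ≤ (x : ℚ); linarith
        · show ((t 0 : ℤ) : ℚ) - ((t 3 : ℤ) : ℚ) - ((t 5 : ℤ) : ℚ) - ω (toQ t) ≤ (x : ℚ); rw [hω]; linarith
        · show -(((t 3 : ℤ) : ℚ)) - ω (toQ t) ≤ (x : ℚ); rw [hω]; linarith
        · show -(((t 4 : ℤ) : ℚ)) + ω (toQ t) ≤ (x : ℚ); rw [hω]; linarith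
        · show ((t 1 : ℤ) : ℚ) - ((t 2 : ℤ) : ℚ) - ((t 4 : ℤ) : ℚ) + ω (toQ t) ≤ (x : ℚ); rw [hω]; linarith
      · intro i
        fin_cases i
        · show (x : ℚ) ≤ 0; linarith
        · show (x : ℚ) ≤ ((t 0 : ℤ) : ℚ) - ((t 3 : ℤ) : ℚ) - ω (toQ t); rw [hω]; linarith
        · show (x : ℚ) ≤ ((t 1 : ℤ) : ℚ) - ((t 4 : ℤ) : ℚ) + ω (toQ t); rw [hω]; linarith
  rw [c]
  refine Nat.card_congr (Equiv.trans ?_ (Equiv.subtypeEquivRight fun x => (hpred x).symm))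
  refine ⟨fun T => ⟨-(T.1 0), ?_⟩, fun x => ⟨![-(x.1), t 0 - t 3 - x.1 - w,
      t 1 - t 4 - x.1 + w, t 3 + x.1, t 4 + x.1, t 2 - t 1 + t 4 + x.1 - 2*w,
      t 3 + x.1 + w, t 4 + x.1 - w, t 2 - t 1 + t 4 + x.1 - w], ?_⟩, ?_, ?_⟩
  · obtain ⟨⟨hnn, hb1, hb2⟩, hpr⟩ := T.2
    have e0 : T.1 1 + T.1 6 = t 0 := congrFun hpr 0
    have e1 : T.1 2 + T.1 7 = t 1 := congrFun hpr 1
    have e2 : T.1 2 + T.1 8 = t 2 := congrFun hpr 2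
    have e3 : T.1 0 + T.1 3 = t 3 := congrFun hpr 3
    have e4 : T.1 0 + T.1 4 = t 4 := congrFun hpr 4
    have e5 : T.1 1 + T.1 5 = t 5 := congrFun hpr 5
    have n0 := hnn 0; have n1 := hnn 1; have n2 := hnn 2; have n3 := hnn 3
    have n4 := hnn 4; have n5 := hnn 5; have n6 := hnn 6; have n7 := hnn 7; have n8 := hnn 8
    refine ⟨?_, ?_, ?_, ?_, ?_, ?_, ?_, ?_, ?_⟩ <;> omega
  · obtain ⟨x, h0, h1, h2, h3, h4, h5, k0, k1, k2⟩ := x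
    refine ⟨⟨fun i => ?_, ?_, ?_⟩, ?_⟩
    · fin_cases i
      · show (0:ℤ) ≤ -x; omega
      · show (0:ℤ) ≤ t 0 - t 3 - x - w; omega
      · show (0:ℤ) ≤ t 1 - t 4 - x + w; omega
      · show (0:ℤ) ≤ t 3 + x; omega
      · show (0:ℤ) ≤ t 4 + x; omega
      · show (0:ℤ) ≤ t 2 - t 1 + t 4 + x - 2*w; omega
      · show (0:ℤ) ≤ t 3 + x + w; omega
      · show (0:ℤ) ≤ t 4 + x - w; omega
      · show (0:ℤ) ≤ t 2 - t 1 + t 4 + x - w; omega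
    · show (t 3 + x) - (t 3 + x + w) = (t 4 + x - w) - (t 4 + x); ring
    · show (t 4 + x - w) - (t 4 + x) = (t 2 - t 1 + t 4 + x - 2*w) - (t 2 - t 1 + t 4 + x - w); ring
    · funext i
      fin_cases i
      · show (t 0 - t 3 - x - w) + (t 3 + x + w) = t 0; ring
      · show (t 1 - t 4 - x + w) + (t 4 + x - w) = t 1; ring
      · show (t 1 - t 4 - x + w) + (t 2 - t 1 + t 4 + x - w) = t 2; ring
      · show -x + (t 3 + x) = t 3; ring
      · show -x + (t 4 + x) = t 4; ring
      · show (t 0 - t 3 - x - w) + (t 2 - t 1 + t 4 + x - 2*w) = t 5; omega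
  · rintro ⟨T, ⟨hnn, hb1, hb2⟩, hpr⟩
    have e0 : T 1 + T 6 = t 0 := congrFun hpr 0
    have e1 : T 2 + T 7 = t 1 := congrFun hpr 1
    have e2 : T 2 + T 8 = t 2 := congrFun hpr 2
    have e3 : T 0 + T 3 = t 3 := congrFun hpr 3
    have e4 : T 0 + T 4 = t 4 := congrFun hpr 4
    have e5 : T 1 + T 5 = t 5 := congrFun hpr 5
    apply Subtype.ext
    funext i
    fin_cases i
    · show -(-(T 0)) = T 0; ring
    · show t 0 - t 3 - (-(T 0)) - w = T 1; omega
    · show t 1 - t 4 - (-(T 0)) + w = T 2; omega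
    · show t 3 + (-(T 0)) = T 3; omega
    · show t 4 + (-(T 0)) = T 4; omega
    · show t 2 - t 1 + t 4 + (-(T 0)) - 2*w = T 5; omega
    · show t 3 + (-(T 0)) + w = T 6; omega
    · show t 4 + (-(T 0)) - w = T 7; omega
    · show t 2 - t 1 + t 4 + (-(T 0)) - w = T 8; omega
  · rintro ⟨x, hx⟩
    apply Subtype.ext
    show -(-x) = x
    ring
end

section
/- For every t in the lattice Λ, the SU(3) triple multiplicity c(t) is nonzero if and only if g_j(t) ≤ f_i(t) for all i ∈ {1,2,3} and all j ∈ {1,…,6}; that is, the support of c consists exactly of the lattice points of the cone C_TM. -/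
section VecEval
variable {α : Type*}

lemma c3_0 (a0 a1 a2 : α) : ![a0,a1,a2] 0 = a0 := rfl
lemma c3_1 (a0 a1 a2 : α) : ![a0,a1,a2] 1 = a1 := rfl
lemma c3_2 (a0 a1 a2 : α) : ![a0,a1,a2] 2 = a2 := rfl
lemma c6_0 (a0 a1 a2 a3 a4 a5 : α) : ![a0,a1,a2,a3,a4,a5] 0 = a0 := rfl
lemma c6_1 (a0 a1 a2 a3 a4 a5 : α) : ![a0,a1,a2,a3,a4,a5] 1 = a1 := rfl
lemma c6_2 (a0 a1 a2 a3 a4 a5 : α) : ![a0,a1,a2,a3,a4,a5] 2 = a2 := rfl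
lemma c6_3 (a0 a1 a2 a3 a4 a5 : α) : ![a0,a1,a2,a3,a4,a5] 3 = a3 := rfl
lemma c6_4 (a0 a1 a2 a3 a4 a5 : α) : ![a0,a1,a2,a3,a4,a5] 4 = a4 := rfl
lemma c6_5 (a0 a1 a2 a3 a4 a5 : α) : ![a0,a1,a2,a3,a4,a5] 5 = a5 := rfl
lemma c9_0 (a0 a1 a2 a3 a4 a5 a6 a7 a8 : α) : ![a0,a1,a2,a3,a4,a5,a6,a7,a8] 0 = a0 := rfl
lemma c9_1 (a0 a1 a2 a3 a4 a5 a6 a7 a8 : α) : ![a0,a1,a2,a3,a4,a5,a6,a7,a8] 1 = a1 := rfl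
lemma c9_2 (a0 a1 a2 a3 a4 a5 a6 a7 a8 : α) : ![a0,a1,a2,a3,a4,a5,a6,a7,a8] 2 = a2 := rfl
lemma c9_3 (a0 a1 a2 a3 a4 a5 a6 a7 a8 : α) : ![a0,a1,a2,a3,a4,a5,a6,a7,a8] 3 = a3 := rfl
lemma c9_4 (a0 a1 a2 a3 a4 a5 a6 a7 a8 : α) : ![a0,a1,a2,a3,a4,a5,a6,a7,a8] 4 = a4 := rfl
lemma c9_5 (a0 a1 a2 a3 a4 a5 a6 a7 a8 : α) : ![a0,a1,a2,a3,a4,a5,a6,a7,a8] 5 = a5 := rfl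
lemma c9_6 (a0 a1 a2 a3 a4 a5 a6 a7 a8 : α) : ![a0,a1,a2,a3,a4,a5,a6,a7,a8] 6 = a6 := rfl
lemma c9_7 (a0 a1 a2 a3 a4 a5 a6 a7 a8 : α) : ![a0,a1,a2,a3,a4,a5,a6,a7,a8] 7 = a7 := rfl
lemma c9_8 (a0 a1 a2 a3 a4 a5 a6 a7 a8 : α) : ![a0,a1,a2,a3,a4,a5,a6,a7,a8] 8 = a8 := rfl
lemma forall3' {P : Fin 3 → Prop} (h0 : P 0) (h1 : P 1) (h2 : P 2) : ∀ i, P i := by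
  intro i; fin_cases i; exacts [h0, h1, h2]
lemma forall6' {P : Fin 6 → Prop} (h0 : P 0) (h1 : P 1) (h2 : P 2) (h3 : P 3) (h4 : P 4) (h5 : P 5) : ∀ i, P i := by
  intro i; fin_cases i; exacts [h0, h1, h2, h3, h4, h5]
lemma forall9' {P : Fin 9 → Prop} (h0 : P 0) (h1 : P 1) (h2 : P 2) (h3 : P 3) (h4 : P 4) (h5 : P 5) (h6 : P 6) (h7 : P 7) (h8 : P 8) : ∀ i, P i := by
  intro i; fin_cases i; exacts [h0, h1, h2, h3, h4, h5, h6, h7, h8]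
lemma funeq6 (u v : Fin 6 → α) (h0 : u 0 = v 0) (h1 : u 1 = v 1) (h2 : u 2 = v 2) (h3 : u 3 = v 3) (h4 : u 4 = v 4) (h5 : u 5 = v 5) : u = v := by
  funext k; fin_cases k; exacts [h0, h1, h2, h3, h4, h5]
lemma funeq9 (u v : Fin 9 → α) (h0 : u 0 = v 0) (h1 : u 1 = v 1) (h2 : u 2 = v 2) (h3 : u 3 = v 3) (h4 : u 4 = v 4) (h5 : u 5 = v 5) (h6 : u 6 = v 6) (h7 : u 7 = v 7) (h8 : u 8 = v 8) : u = v := by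
  funext k; fin_cases k; exacts [h0, h1, h2, h3, h4, h5, h6, h7, h8]
end VecEval

/-- explicit BZ triangle over `t` with parameter `s` and integer weight `w`. -/
def mkT (t : Fin 6 → ℤ) (w s : ℤ) : Fin 9 → ℤ :=
  ![s, t 0 - t 3 - w + s, t 1 - t 4 + w + s, t 3 - s, t 4 - s,
    t 2 - t 1 + t 4 - 2*w - s, t 3 + w - s, t 4 - w - s, t 2 - t 1 + t 4 - w - s]

theorem stmt1 (t : Fin 6 → ℤ) (ht : inLattice t) :
    c t ≠ 0 ↔ ∀ (i : Fin 3) (j : Fin 6), g j (toQ t) ≤ f i (toQ t) := by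
  constructor
  · intro hc
    unfold c at hc
    rw [Nat.card_ne_zero] at hc
    obtain ⟨⟨⟨T, hBZ, hpr⟩⟩, -⟩ := hc
    subst hpr
    have q0 : ∀ k, (0:ℚ) ≤ (T k : ℚ) := fun k => by exact_mod_cast hBZ.1 k
    have e1 : (T 3:ℚ) - T 6 = T 7 - T 4 := by exact_mod_cast hBZ.2.1
    have e2 : (T 7:ℚ) - T 4 = T 5 - T 8 := by exact_mod_cast hBZ.2.2
    refine forall3' (forall6' ?_ ?_ ?_ ?_ ?_ ?_) (forall6' ?_ ?_ ?_ ?_ ?_ ?_)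
      (forall6' ?_ ?_ ?_ ?_ ?_ ?_) <;>
    · simp only [f, g, ω, toQ, pr, c3_0, c3_1, c3_2, c6_0, c6_1, c6_2, c6_3, c6_4, c6_5, c9_0, c9_1, c9_2, c9_3, c9_4, c9_5, c9_6, c9_7, c9_8]
      push_cast
      linarith [q0 0, q0 1, q0 2, q0 3, q0 4, q0 5, q0 6, q0 7, q0 8]
  · intro h
    obtain ⟨w, hw⟩ : (3:ℤ) ∣ (t 0 + t 2 + t 4) - (t 1 + t 3 + t 5) := by
      have := Int.ModEq.dvd ht; omega
    have hω : ω (toQ t) = (w : ℚ) := by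
      have h3 : (toQ t 0) + toQ t 2 + toQ t 4 - toQ t 1 - toQ t 3 - toQ t 5 = 3*(w:ℚ) := by
        simp only [toQ]; exact_mod_cast by linarith [hw]
      rw [ω, h3]; ring
    set s : ℤ := max (max 0 (t 3 + w - t 0)) (t 4 - w - t 1) with hs
    have hs0 : 0 ≤ s := le_trans (le_max_left _ _) (le_max_left _ _)
    have hs1 : t 3 + w - t 0 ≤ s := le_trans (le_max_right _ _) (le_max_left _ _)
    have hs2 : t 4 - w - t 1 ≤ s := le_max_right _ _
    have u0 : s ≤ t 3 := by
      have a1 := h 0 0; have a2 := h 1 0; have a3 := h 2 0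
      simp only [f, g, c3_0, c3_1, c3_2, c6_0, c6_1, c6_2, c6_3, c6_4, c6_5, c9_0, c9_1, c9_2, c9_3, c9_4, c9_5, c9_6, c9_7, c9_8] at a1 a2 a3
      rw [hω] at a2 a3
      try rw [hω] at a1
      simp only [toQ] at a1 a2 a3
      rw [hs]
      refine max_le (max_le ?_ ?_) ?_ <;> (qify; linarith)
    have u1 : s ≤ t 4 := by
      have a1 := h 0 1; have a2 := h 1 1; have a3 := h 2 1
      simp only [f, g, c3_0, c3_1, c3_2, c6_0, c6_1, c6_2, c6_3, c6_4, c6_5, c9_0, c9_1, c9_2, c9_3, c9_4, c9_5, c9_6, c9_7, c9_8] at a1 a2 a3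
      rw [hω] at a2 a3
      try rw [hω] at a1
      simp only [toQ] at a1 a2 a3
      rw [hs]
      refine max_le (max_le ?_ ?_) ?_ <;> (qify; linarith)
    have u2 : s ≤ t 3 + t 5 - t 0 + w := by
      have a1 := h 0 2; have a2 := h 1 2; have a3 := h 2 2
      simp only [f, g, c3_0, c3_1, c3_2, c6_0, c6_1, c6_2, c6_3, c6_4, c6_5, c9_0, c9_1, c9_2, c9_3, c9_4, c9_5, c9_6, c9_7, c9_8] at a1 a2 a3
      rw [hω] at a2 a3
      try rw [hω] at a1
      simp only [toQ] at a1 a2 a3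
      rw [hs]
      refine max_le (max_le ?_ ?_) ?_ <;> (qify; linarith)
    have u3 : s ≤ t 3 + w := by
      have a1 := h 0 3; have a2 := h 1 3; have a3 := h 2 3
      simp only [f, g, c3_0, c3_1, c3_2, c6_0, c6_1, c6_2, c6_3, c6_4, c6_5, c9_0, c9_1, c9_2, c9_3, c9_4, c9_5, c9_6, c9_7, c9_8] at a1 a2 a3
      rw [hω] at a2 a3
      try rw [hω] at a1
      simp only [toQ] at a1 a2 a3
      rw [hs]
      refine max_le (max_le ?_ ?_) ?_ <;> (qify; linarith)
    have u4 : s ≤ t 4 - w := by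
      have a1 := h 0 4; have a2 := h 1 4; have a3 := h 2 4
      simp only [f, g, c3_0, c3_1, c3_2, c6_0, c6_1, c6_2, c6_3, c6_4, c6_5, c9_0, c9_1, c9_2, c9_3, c9_4, c9_5, c9_6, c9_7, c9_8] at a1 a2 a3
      rw [hω] at a2 a3
      try rw [hω] at a1
      simp only [toQ] at a1 a2 a3
      rw [hs]
      refine max_le (max_le ?_ ?_) ?_ <;> (qify; linarith)
    have u5 : s ≤ t 2 + t 4 - t 1 - w := by
      have a1 := h 0 5; have a2 := h 1 5; have a3 := h 2 5
      simp only [f, g, c3_0, c3_1, c3_2, c6_0, c6_1, c6_2, c6_3, c6_4, c6_5, c9_0, c9_1, c9_2, c9_3, c9_4, c9_5, c9_6, c9_7, c9_8] at a1 a2 a3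
      rw [hω] at a2 a3
      try rw [hω] at a1
      simp only [toQ] at a1 a2 a3
      rw [hs]
      refine max_le (max_le ?_ ?_) ?_ <;> (qify; linarith)
    unfold c
    rw [Nat.card_ne_zero]
    constructor
    · refine ⟨⟨mkT t w s, ⟨?_, ?_, ?_⟩, ?_⟩⟩
      · refine forall9' ?_ ?_ ?_ ?_ ?_ ?_ ?_ ?_ ?_ <;>
        · simp only [mkT, c3_0, c3_1, c3_2, c6_0, c6_1, c6_2, c6_3, c6_4, c6_5, c9_0, c9_1, c9_2, c9_3, c9_4, c9_5, c9_6, c9_7, c9_8]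
          omega
      · show (t 3 - s) - (t 3 + w - s) = (t 4 - w - s) - (t 4 - s); ring
      · show (t 4 - w - s) - (t 4 - s) = (t 2 - t 1 + t 4 - 2*w - s) - (t 2 - t 1 + t 4 - w - s)
        ring
      · refine funeq6 _ _ ?_ ?_ ?_ ?_ ?_ ?_ <;>
        · simp only [pr, mkT, c3_0, c3_1, c3_2, c6_0, c6_1, c6_2, c6_3, c6_4, c6_5, c9_0, c9_1, c9_2, c9_3, c9_4, c9_5, c9_6, c9_7, c9_8]
          omega
    · have hIcc : Finite (Set.Icc (0:ℤ) (t 3)) := (Set.finite_Icc _ _).to_subtype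
      refine Finite.of_injective
        (fun T : {T : Fin 9 → ℤ // IsBZ T ∧ pr T = t} =>
          (⟨T.1 0, Set.mem_Icc.mpr ⟨T.2.1.1 0, by
            have h3 : T.1 0 + T.1 3 = t 3 := congrFun T.2.2 3
            have h4 := T.2.1.1 3
            omega⟩⟩ : Set.Icc (0:ℤ) (t 3))) ?_
      rintro ⟨T, ⟨hTn, d1, d2⟩, hp⟩ ⟨T', ⟨hTn', d1', d2'⟩, hp'⟩ hTT
      have h0 : T 0 = T' 0 := congrArg Subtype.val hTT
      have E0 : T 1 + T 6 = t 0 := congrFun hp 0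
      have E1 : T 2 + T 7 = t 1 := congrFun hp 1
      have E2 : T 2 + T 8 = t 2 := congrFun hp 2
      have E3 : T 0 + T 3 = t 3 := congrFun hp 3
      have E4 : T 0 + T 4 = t 4 := congrFun hp 4
      have E5 : T 1 + T 5 = t 5 := congrFun hp 5
      have F0 : T' 1 + T' 6 = t 0 := congrFun hp' 0
      have F1 : T' 2 + T' 7 = t 1 := congrFun hp' 1
      have F2 : T' 2 + T' 8 = t 2 := congrFun hp' 2
      have F3 : T' 0 + T' 3 = t 3 := congrFun hp' 3
      have F4 : T' 0 + T' 4 = t 4 := congrFun hp' 4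
      have F5 : T' 1 + T' 5 = t 5 := congrFun hp' 5
      apply Subtype.ext
      show T = T'
      refine funeq9 _ _ ?_ ?_ ?_ ?_ ?_ ?_ ?_ ?_ ?_ <;> omega
end

section
/- For every t in the lattice Λ satisfying g_j(t) ≤ f_i(t) for all i ∈ {1,2,3} and j ∈ {1,…,6}, the SU(3) triple multiplicity satisfies c(t) = 1 + min over all pairs (i,j) of (f_i(t) − g_j(t)). -/
/-- lower endpoint of the parameter interval -/
def aa (t : Fin 6 → ℤ) (w : ℤ) : ℤ := max 0 (max (t 3 - t 0 + w) (t 4 - t 1 - w))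

/-- upper endpoint of the parameter interval -/
def bb (t : Fin 6 → ℤ) (w : ℤ) : ℤ :=
  min (t 3) (min (t 4) (min (t 3 + t 5 - t 0 + w)
    (min (t 3 + w) (min (t 4 - w) (t 2 + t 4 - t 1 - w)))))

/-- the BZ triangle with parameter `k` over `t` -/
def mk (t : Fin 6 → ℤ) (w k : ℤ) : Fin 9 → ℤ :=
  ![k, t 0 - t 3 + k - w, t 1 - t 4 + k + w, t 3 - k, t 4 - k, t 5 - t 0 + t 3 - k + w,
    t 3 - k + w, t 4 - k - w, t 2 - t 1 + t 4 - k - w]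

lemma inf3 {α} [LinearOrder α] (F : Fin 3 → α) :
    Finset.univ.inf' Finset.univ_nonempty F = min (F 0) (min (F 1) (F 2)) := by
  apply le_antisymm
  · exact le_min (Finset.inf'_le _ (Finset.mem_univ _))
      (le_min (Finset.inf'_le _ (Finset.mem_univ _)) (Finset.inf'_le _ (Finset.mem_univ _)))
  · refine Finset.le_inf' _ _ fun i _ => ?_
    fin_cases i
    · exact min_le_left _ _
    · exact (min_le_right _ _).trans (min_le_left _ _)
    · exact (min_le_right _ _).trans (min_le_right _ _)

lemma sup6 {α} [LinearOrder α] (G : Fin 6 → α) :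
    Finset.univ.sup' Finset.univ_nonempty G =
      max (G 0) (max (G 1) (max (G 2) (max (G 3) (max (G 4) (G 5))))) := by
  apply le_antisymm
  · refine Finset.sup'_le _ _ fun i _ => ?_
    fin_cases i
    · exact le_max_left _ _
    · exact le_trans (le_max_left _ _) (le_max_right _ _)
    · exact le_trans ((le_max_left _ _).trans (le_max_right _ _)) (le_max_right _ _)
    · exact le_trans (((le_max_left _ _).trans (le_max_right _ _)).trans (le_max_right _ _)) (le_max_right _ _)
    · exact le_trans ((((le_max_left _ _).trans (le_max_right _ _)).trans (le_max_right _ _)).trans (le_max_right _ _)) (le_max_right _ _)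
    · exact le_trans ((((le_max_right _ _).trans (le_max_right _ _)).trans (le_max_right _ _)).trans (le_max_right _ _)) (le_max_right _ _)
  · exact max_le (Finset.le_sup' _ (Finset.mem_univ _))
      (max_le (Finset.le_sup' _ (Finset.mem_univ _))
        (max_le (Finset.le_sup' _ (Finset.mem_univ _))
          (max_le (Finset.le_sup' _ (Finset.mem_univ _))
            (max_le (Finset.le_sup' _ (Finset.mem_univ _)) (Finset.le_sup' _ (Finset.mem_univ _))))))

lemma mk_inj (t : Fin 6 → ℤ) (w : ℤ) : Function.Injective (mk t w) := by
  intro a b hab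
  exact congrFun hab 0

lemma count_eq (t : Fin 6 → ℤ) (w : ℤ) (hw : t 0 + t 2 + t 4 - (t 1 + t 3 + t 5) = 3 * w) :
    c t = (bb t w + 1 - aa t w).toNat := by
  have hset : {T : Fin 9 → ℤ | IsBZ T ∧ pr T = t} = (mk t w) '' (Set.Icc (aa t w) (bb t w)) := by
    ext T
    constructor
    · rintro ⟨⟨hpos, hd1, hd2⟩, hpr⟩
      have e0 : T 1 + T 6 = t 0 := congrFun hpr 0
      have e1 : T 2 + T 7 = t 1 := congrFun hpr 1
      have e2 : T 2 + T 8 = t 2 := congrFun hpr 2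
      have e3 : T 0 + T 3 = t 3 := congrFun hpr 3
      have e4 : T 0 + T 4 = t 4 := congrFun hpr 4
      have e5 : T 1 + T 5 = t 5 := congrFun hpr 5
      have p0 := hpos 0; have p1 := hpos 1; have p2 := hpos 2; have p3 := hpos 3
      have p4 := hpos 4; have p5 := hpos 5; have p6 := hpos 6; have p7 := hpos 7
      have p8 := hpos 8
      refine ⟨T 0, ?_, ?_⟩
      · rw [Set.mem_Icc]
        unfold aa bb
        omega
      · funext i
        fin_cases i
        · exact (rfl : (mk t w (T 0)) 0 = T 0)
        · exact (by omega : t 0 - t 3 + T 0 - w = T 1)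
        · exact (by omega : t 1 - t 4 + T 0 + w = T 2)
        · exact (by omega : t 3 - T 0 = T 3)
        · exact (by omega : t 4 - T 0 = T 4)
        · exact (by omega : t 5 - t 0 + t 3 - T 0 + w = T 5)
        · exact (by omega : t 3 - T 0 + w = T 6)
        · exact (by omega : t 4 - T 0 - w = T 7)
        · exact (by omega : t 2 - t 1 + t 4 - T 0 - w = T 8)
    · rintro ⟨k, hk, rfl⟩
      rw [Set.mem_Icc] at hk
      unfold aa bb at hk
      refine ⟨⟨?_, ?_, ?_⟩, ?_⟩
      · intro i
        fin_cases i
        · exact (by omega : (0:ℤ) ≤ k)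
        · exact (by omega : (0:ℤ) ≤ t 0 - t 3 + k - w)
        · exact (by omega : (0:ℤ) ≤ t 1 - t 4 + k + w)
        · exact (by omega : (0:ℤ) ≤ t 3 - k)
        · exact (by omega : (0:ℤ) ≤ t 4 - k)
        · exact (by omega : (0:ℤ) ≤ t 5 - t 0 + t 3 - k + w)
        · exact (by omega : (0:ℤ) ≤ t 3 - k + w)
        · exact (by omega : (0:ℤ) ≤ t 4 - k - w)
        · exact (by omega : (0:ℤ) ≤ t 2 - t 1 + t 4 - k - w)
      · show t 3 - k - (t 3 - k + w) = t 4 - k - w - (t 4 - k)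
        ring
      · show t 4 - k - w - (t 4 - k) = t 5 - t 0 + t 3 - k + w - (t 2 - t 1 + t 4 - k - w)
        omega
      · funext i
        fin_cases i
        · show t 0 - t 3 + k - w + (t 3 - k + w) = t 0; ring
        · show t 1 - t 4 + k + w + (t 4 - k - w) = t 1; ring
        · show t 1 - t 4 + k + w + (t 2 - t 1 + t 4 - k - w) = t 2; ring
        · show k + (t 3 - k) = t 3; ring
        · show k + (t 4 - k) = t 4; ring
        · show t 0 - t 3 + k - w + (t 5 - t 0 + t 3 - k + w) = t 5; ring
  have : c t = Nat.card {T : Fin 9 → ℤ | IsBZ T ∧ pr T = t} := rfl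
  rw [this, Nat.card_coe_set_eq, hset, Set.ncard_image_of_injective _ (mk_inj t w),
    ← Finset.coe_Icc, Set.ncard_coe_finset, Int.card_Icc]

set_option maxHeartbeats 1600000 in
theorem stmt3 (t : Fin 6 → ℤ) (ht : inLattice t)
    (h : ∀ (i : Fin 3) (j : Fin 6), g j (toQ t) ≤ f i (toQ t)) :
    (c t : ℚ) = 1 + Finset.univ.inf' Finset.univ_nonempty
      (fun p : Fin 3 × Fin 6 => f p.1 (toQ t) - g p.2 (toQ t)) := by
  obtain ⟨u, hu⟩ := Int.ModEq.dvd ht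
  obtain ⟨w, hw⟩ : ∃ w : ℤ, t 0 + t 2 + t 4 - (t 1 + t 3 + t 5) = 3 * w := ⟨-u, by omega⟩
  have hωw : ω (toQ t) = (w : ℚ) := by
    have h3 : ((t 0 + t 2 + t 4 - (t 1 + t 3 + t 5) : ℤ) : ℚ) = ((3 * w : ℤ) : ℚ) := by
      exact_mod_cast congrArg (fun z : ℤ => (z : ℚ)) hw
    push_cast at h3
    rw [ω]
    simp only [toQ]
    linarith
  -- explicit forms
  have hf : (Finset.univ.inf' Finset.univ_nonempty fun i => f i (toQ t))
      = ((min 0 (min (t 0 - t 3 - w) (t 1 - t 4 + w)) : ℤ) : ℚ) := by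
    rw [inf3]
    show min (0:ℚ) (min (toQ t 0 - toQ t 3 - ω (toQ t)) (toQ t 1 - toQ t 4 + ω (toQ t))) = _
    simp only [toQ, hωw]
    push_cast
    rfl
  have hg : (Finset.univ.sup' Finset.univ_nonempty fun j => g j (toQ t))
      = ((max (-t 3) (max (-t 4) (max (t 0 - t 3 - t 5 - w)
          (max (-t 3 - w) (max (-t 4 + w) (t 1 - t 2 - t 4 + w))))) : ℤ) : ℚ) := by
    rw [sup6]
    show max (-toQ t 3) (max (-toQ t 4) (max (toQ t 0 - toQ t 3 - toQ t 5 - ω (toQ t))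
      (max (-toQ t 3 - ω (toQ t)) (max (-toQ t 4 + ω (toQ t))
        (toQ t 1 - toQ t 2 - toQ t 4 + ω (toQ t)))))) = _
    simp only [toQ, hωw]
    push_cast
    rfl
  have hpair : Finset.univ.inf' Finset.univ_nonempty
      (fun p : Fin 3 × Fin 6 => f p.1 (toQ t) - g p.2 (toQ t))
      = (Finset.univ.inf' Finset.univ_nonempty fun i => f i (toQ t))
        - (Finset.univ.sup' Finset.univ_nonempty fun j => g j (toQ t)) := by
    apply le_antisymm
    · obtain ⟨i, -, hi⟩ := Finset.exists_mem_eq_inf' (Finset.univ_nonempty)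
        (fun i : Fin 3 => f i (toQ t))
      obtain ⟨j, -, hj⟩ := Finset.exists_mem_eq_sup' (Finset.univ_nonempty)
        (fun j : Fin 6 => g j (toQ t))
      rw [hi, hj]
      exact Finset.inf'_le _ (Finset.mem_univ (i, j))
    · refine Finset.le_inf' _ _ ?_
      rintro ⟨i, j⟩ -
      exact sub_le_sub (Finset.inf'_le _ (Finset.mem_univ i)) (Finset.le_sup' (fun j : Fin 6 => g j (toQ t)) (Finset.mem_univ j))
  have hm : max (-t 3) (max (-t 4) (max (t 0 - t 3 - t 5 - w)
      (max (-t 3 - w) (max (-t 4 + w) (t 1 - t 2 - t 4 + w)))))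
      ≤ min 0 (min (t 0 - t 3 - w) (t 1 - t 4 + w)) := by
    have hle : (Finset.univ.sup' Finset.univ_nonempty fun j => g j (toQ t))
        ≤ (Finset.univ.inf' Finset.univ_nonempty fun i => f i (toQ t)) :=
      Finset.sup'_le _ _ fun j _ => Finset.le_inf' _ _ fun i _ => h i j
    rw [hf, hg] at hle
    exact_mod_cast hle
  have ha : aa t w = -(min 0 (min (t 0 - t 3 - w) (t 1 - t 4 + w))) := by
    unfold aa; omega
  have hb : bb t w = -(max (-t 3) (max (-t 4) (max (t 0 - t 3 - t 5 - w)
      (max (-t 3 - w) (max (-t 4 + w) (t 1 - t 2 - t 4 + w)))))) := by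
    unfold bb; omega
  have hab : aa t w ≤ bb t w := by
    rw [ha, hb]; exact neg_le_neg hm
  have h1 : (c t : ℤ) = bb t w + 1 - aa t w := by
    rw [count_eq t w hw]
    exact Int.toNat_of_nonneg (by omega)
  have hc : ((c t : ℕ) : ℚ) = ((bb t w + 1 - aa t w : ℤ) : ℚ) := by
    rw [show ((c t : ℕ) : ℚ) = (((c t : ℕ) : ℤ) : ℚ) from (Int.cast_natCast _).symm, h1]
  have hZ : bb t w + 1 - aa t w = 1 + min 0 (min (t 0 - t 3 - w) (t 1 - t 4 + w))
      - max (-t 3) (max (-t 4) (max (t 0 - t 3 - t 5 - w)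
          (max (-t 3 - w) (max (-t 4 + w) (t 1 - t 2 - t 4 + w))))) := by
    rw [ha, hb]; ring
  rw [hc, hpair, hf, hg, hZ]
  push_cast
  ring
end

section
/- The subgroup of ℤ⁶ generated by the support {t ∈ ℤ⁶ : c(t) ≠ 0} of the SU(3) triple multiplicity function equals the lattice Λ = {(ℓ₁,ℓ₂,m₁,m₂,n₁,n₂) ∈ ℤ⁶ : ℓ₁+m₁+n₁ ≡ ℓ₂+m₂+n₂ (mod 3)}. -/
lemma cons_val_five {α : Type*} (a b c d e f : α) : (![a,b,c,d,e,f] : Fin 6 → α) 5 = f := rfl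

lemma cons_val_five' {α : Type*} (a b c d e f : α) (h : 5 < 6) :
    (![a,b,c,d,e,f] : Fin 6 → α) ⟨5, h⟩ = f := rfl

lemma fiber_finite (t : Fin 6 → ℤ) : {T : Fin 9 → ℤ | IsBZ T ∧ pr T = t}.Finite := by
  set B : ℤ := |t 0| + |t 1| + |t 2| + |t 3| + |t 4| + |t 5| with hB
  apply Set.Finite.subset (Set.finite_Icc (fun _ : Fin 9 => (0:ℤ)) (fun _ => B))
  rintro T ⟨⟨hpos, h1, h2⟩, hpr⟩
  have e0 := congrFun hpr 0
  have e1 := congrFun hpr 1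
  have e2 := congrFun hpr 2
  have e3 := congrFun hpr 3
  have e4 := congrFun hpr 4
  have e5 := congrFun hpr 5
  simp [pr, cons_val_five, cons_val_five'] at e0 e1 e2 e3 e4 e5
  have p0 := hpos 0; have p1 := hpos 1; have p2 := hpos 2
  have p3 := hpos 3; have p4 := hpos 4; have p5 := hpos 5
  have p6 := hpos 6; have p7 := hpos 7; have p8 := hpos 8
  have a0 := le_abs_self (t 0); have a1 := le_abs_self (t 1)
  have a2 := le_abs_self (t 2); have a3 := le_abs_self (t 3)
  have a4 := le_abs_self (t 4); have a5 := le_abs_self (t 5)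
  have b0 := abs_nonneg (t 0); have b1 := abs_nonneg (t 1)
  have b2 := abs_nonneg (t 2); have b3 := abs_nonneg (t 3)
  have b4 := abs_nonneg (t 4); have b5 := abs_nonneg (t 5)
  refine ⟨fun i => hpos i, fun i => ?_⟩
  fin_cases i <;> simp [hB] <;> omega

lemma c_ne_zero_of_witness {t : Fin 6 → ℤ} (T : Fin 9 → ℤ)
    (h : IsBZ T ∧ pr T = t) : c t ≠ 0 := by
  have hf : Finite {T : Fin 9 → ℤ // IsBZ T ∧ pr T = t} := (fiber_finite t).to_subtype
  have hn : Nonempty {T : Fin 9 → ℤ // IsBZ T ∧ pr T = t} := ⟨⟨T, h⟩⟩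
  unfold c
  exact Nat.card_pos.ne'

def myLat : AddSubgroup (Fin 6 → ℤ) where
  carrier := {t | inLattice t}
  zero_mem' := by simp [inLattice, Int.ModEq]
  add_mem' := by
    intro a b ha hb
    simp only [Set.mem_setOf_eq, inLattice, Int.modEq_iff_dvd] at *
    simp only [Pi.add_apply]
    omega
  neg_mem' := by
    intro a ha
    simp only [Set.mem_setOf_eq, inLattice, Int.modEq_iff_dvd] at *
    simp only [Pi.neg_apply]
    omega

theorem stmt4 :
    (AddSubgroup.closure {t : Fin 6 → ℤ | c t ≠ 0} : Set (Fin 6 → ℤ)) =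
      {t : Fin 6 → ℤ | inLattice t} := by
  ext t
  simp only [SetLike.mem_coe, Set.mem_setOf_eq]
  constructor
  · intro ht
    have hle : AddSubgroup.closure {t : Fin 6 → ℤ | c t ≠ 0} ≤ myLat := by
      rw [AddSubgroup.closure_le]
      intro u hu
      have hne : Nonempty {T : Fin 9 → ℤ // IsBZ T ∧ pr T = u} :=
        (Nat.card_ne_zero.mp hu).1
      obtain ⟨⟨T, ⟨⟨hpos, h1, h2⟩, hpr⟩⟩⟩ := hne
      have e0 := congrFun hpr 0
      have e1 := congrFun hpr 1
      have e2 := congrFun hpr 2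
      have e3 := congrFun hpr 3
      have e4 := congrFun hpr 4
      have e5 := congrFun hpr 5
      simp [pr, cons_val_five, cons_val_five'] at e0 e1 e2 e3 e4 e5
      show inLattice u
      rw [inLattice, Int.modEq_iff_dvd]
      omega
    exact hle ht
  · intro ht
    rw [inLattice, Int.modEq_iff_dvd] at ht
    obtain ⟨s, hs⟩ := ht
    have h1 : (![1,0,0,1,0,0] : Fin 6 → ℤ) ∈ AddSubgroup.closure {t : Fin 6 → ℤ | c t ≠ 0} :=
      AddSubgroup.subset_closure (c_ne_zero_of_witness ![0,0,0,1,0,0,1,0,0]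
        ⟨⟨by decide, by decide, by decide⟩, by funext i; fin_cases i <;> rfl⟩)
    have h2 : (![0,1,0,0,1,0] : Fin 6 → ℤ) ∈ AddSubgroup.closure {t : Fin 6 → ℤ | c t ≠ 0} :=
      AddSubgroup.subset_closure (c_ne_zero_of_witness ![0,0,0,0,1,0,0,1,0]
        ⟨⟨by decide, by decide, by decide⟩, by funext i; fin_cases i <;> rfl⟩)
    have h3 : (![0,0,1,0,0,1] : Fin 6 → ℤ) ∈ AddSubgroup.closure {t : Fin 6 → ℤ | c t ≠ 0} :=
      AddSubgroup.subset_closure (c_ne_zero_of_witness ![0,0,0,0,0,1,0,0,1]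
        ⟨⟨by decide, by decide, by decide⟩, by funext i; fin_cases i <;> rfl⟩)
    have h5 : (![1,0,0,0,0,1] : Fin 6 → ℤ) ∈ AddSubgroup.closure {t : Fin 6 → ℤ | c t ≠ 0} :=
      AddSubgroup.subset_closure (c_ne_zero_of_witness ![0,1,0,0,0,0,0,0,0]
        ⟨⟨by decide, by decide, by decide⟩, by funext i; fin_cases i <;> rfl⟩)
    have h6 : (![0,1,1,0,0,0] : Fin 6 → ℤ) ∈ AddSubgroup.closure {t : Fin 6 → ℤ | c t ≠ 0} :=
      AddSubgroup.subset_closure (c_ne_zero_of_witness ![0,0,1,0,0,0,0,0,0]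
        ⟨⟨by decide, by decide, by decide⟩, by funext i; fin_cases i <;> rfl⟩)
    have h7 : (![1,0,1,0,1,0] : Fin 6 → ℤ) ∈ AddSubgroup.closure {t : Fin 6 → ℤ | c t ≠ 0} :=
      AddSubgroup.subset_closure (c_ne_zero_of_witness ![0,0,0,0,1,0,1,0,1]
        ⟨⟨by decide, by decide, by decide⟩, by funext i; fin_cases i <;> rfl⟩)
    have key : t = (t 3) • (![1,0,0,1,0,0] : Fin 6 → ℤ)
        + (t 4 + s) • (![0,1,0,0,1,0] : Fin 6 → ℤ)
        + (t 5 - t 0 + t 3 - s) • (![0,0,1,0,0,1] : Fin 6 → ℤ)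
        + (t 0 - t 3 + s) • (![1,0,0,0,0,1] : Fin 6 → ℤ)
        + (t 1 - t 4 - s) • (![0,1,1,0,0,0] : Fin 6 → ℤ)
        + (-s) • (![1,0,1,0,1,0] : Fin 6 → ℤ) := by
      funext i
      fin_cases i <;>
        simp [Pi.add_apply, Pi.smul_apply, smul_eq_mul, cons_val_five, cons_val_five'] <;> omega
    rw [key]
    exact add_mem (add_mem (add_mem (add_mem (add_mem (zsmul_mem h1 _) (zsmul_mem h2 _))
      (zsmul_mem h3 _)) (zsmul_mem h5 _)) (zsmul_mem h6 _)) (zsmul_mem h7 _)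
end

section
/- Every vector v ∈ ℝ⁹ with all coordinates nonnegative and satisfying z₁−z₄ = z₅−z₂ = z₃−z₆ is a linear combination with nonnegative real coefficients of the eight fundamental BZ triangles; and if moreover v has integer coordinates, then v is a linear combination of the eight fundamental BZ triangles with nonnegative integer coefficients. -/
/-- The eight fundamental BZ triangles, as integer vectors in coordinates
`(y₁,y₂,y₃,z₁,z₂,z₃,z₄,z₅,z₆)` (indexed `0,…,8`), in the order
`Ĉ₁, Ĉ₂, Ĉ₃, D̂₁, D̂₃, D̂₅, T̂_odd, T̂_even`. -/
def fund : Fin 8 → Fin 9 → ℤ :=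
  ![![1, 0, 0, 0, 0, 0, 0, 0, 0],
    ![0, 1, 0, 0, 0, 0, 0, 0, 0],
    ![0, 0, 1, 0, 0, 0, 0, 0, 0],
    ![0, 0, 0, 1, 0, 0, 1, 0, 0],
    ![0, 0, 0, 0, 0, 1, 0, 0, 1],
    ![0, 0, 0, 0, 1, 0, 0, 1, 0],
    ![0, 0, 0, 1, 0, 1, 0, 1, 0],
    ![0, 0, 0, 0, 1, 0, 1, 0, 1]]

/-- The fundamental BZ triangles as real vectors. -/
noncomputable def fundR (k : Fin 8) : Fin 9 → ℝ := fun i => (fund k i : ℝ)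

lemma my_cons_9_4 {α : Type*} (x0 x1 x2 x3 x4 x5 x6 x7 x8 : α) :
    (![x0,x1,x2,x3,x4,x5,x6,x7,x8] : Fin 9 → α) 4 = x4 := rfl

lemma my_cons_9_5 {α : Type*} (x0 x1 x2 x3 x4 x5 x6 x7 x8 : α) :
    (![x0,x1,x2,x3,x4,x5,x6,x7,x8] : Fin 9 → α) 5 = x5 := rfl

lemma my_cons_9_6 {α : Type*} (x0 x1 x2 x3 x4 x5 x6 x7 x8 : α) :
    (![x0,x1,x2,x3,x4,x5,x6,x7,x8] : Fin 9 → α) 6 = x6 := rfl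

lemma my_cons_9_7 {α : Type*} (x0 x1 x2 x3 x4 x5 x6 x7 x8 : α) :
    (![x0,x1,x2,x3,x4,x5,x6,x7,x8] : Fin 9 → α) 7 = x7 := rfl

lemma my_cons_9_8 {α : Type*} (x0 x1 x2 x3 x4 x5 x6 x7 x8 : α) :
    (![x0,x1,x2,x3,x4,x5,x6,x7,x8] : Fin 9 → α) 8 = x8 := rfl

lemma my_cons_8_4 {α : Type*} (x0 x1 x2 x3 x4 x5 x6 x7 : α) :
    (![x0,x1,x2,x3,x4,x5,x6,x7] : Fin 8 → α) 4 = x4 := rfl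

lemma my_cons_8_5 {α : Type*} (x0 x1 x2 x3 x4 x5 x6 x7 : α) :
    (![x0,x1,x2,x3,x4,x5,x6,x7] : Fin 8 → α) 5 = x5 := rfl

lemma my_cons_8_6 {α : Type*} (x0 x1 x2 x3 x4 x5 x6 x7 : α) :
    (![x0,x1,x2,x3,x4,x5,x6,x7] : Fin 8 → α) 6 = x6 := rfl

lemma my_cons_8_7 {α : Type*} (x0 x1 x2 x3 x4 x5 x6 x7 : α) :
    (![x0,x1,x2,x3,x4,x5,x6,x7] : Fin 8 → α) 7 = x7 := rfl

theorem stmt5 :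
    (∀ v : Fin 9 → ℝ, (∀ i, 0 ≤ v i) →
      v 3 - v 6 = v 7 - v 4 → v 7 - v 4 = v 5 - v 8 →
      ∃ a : Fin 8 → ℝ, (∀ k, 0 ≤ a k) ∧ v = ∑ k, a k • fundR k) ∧
    (∀ v : Fin 9 → ℤ, (∀ i, 0 ≤ v i) →
      v 3 - v 6 = v 7 - v 4 → v 7 - v 4 = v 5 - v 8 →
      ∃ a : Fin 8 → ℕ, v = ∑ k, (a k : ℤ) • fund k) := by
  constructor
  · intro v hv h1 h2
    rcases le_total (v 6) (v 3) with hd | hd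
    · refine ⟨![v 0, v 1, v 2, v 6, v 8, v 4, v 3 - v 6, 0], ?_, ?_⟩
      · intro k
        fin_cases k <;> simp [hv, my_cons_8_4, my_cons_8_5, my_cons_8_6, my_cons_8_7] <;> linarith [hv 3, hv 4, hv 6, hv 8]
      · funext i
        fin_cases i <;>
          simp [fundR, fund, Fin.sum_univ_succ, my_cons_9_4, my_cons_9_5, my_cons_9_6, my_cons_9_7, my_cons_9_8, my_cons_8_4, my_cons_8_5, my_cons_8_6, my_cons_8_7] <;> linarith
    · refine ⟨![v 0, v 1, v 2, v 3, v 5, v 7, 0, v 6 - v 3], ?_, ?_⟩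
      · intro k
        fin_cases k <;> simp [hv, my_cons_8_4, my_cons_8_5, my_cons_8_6, my_cons_8_7] <;> linarith [hv 3, hv 6]
      · funext i
        fin_cases i <;>
          simp [fundR, fund, Fin.sum_univ_succ, my_cons_9_4, my_cons_9_5, my_cons_9_6, my_cons_9_7, my_cons_9_8, my_cons_8_4, my_cons_8_5, my_cons_8_6, my_cons_8_7] <;> linarith
  · intro v hv h1 h2
    rcases le_total (v 6) (v 3) with hd | hd
    · refine ⟨![(v 0).toNat, (v 1).toNat, (v 2).toNat, (v 6).toNat, (v 8).toNat,
        (v 4).toNat, (v 3 - v 6).toNat, 0], ?_⟩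
      funext i
      fin_cases i <;>
        simp [fund, Fin.sum_univ_succ, Int.toNat_of_nonneg, hv, my_cons_9_4, my_cons_9_5, my_cons_9_6, my_cons_9_7, my_cons_9_8, my_cons_8_4, my_cons_8_5, my_cons_8_6, my_cons_8_7,
          Int.toNat_of_nonneg (sub_nonneg.mpr hd)] <;> omega
    · refine ⟨![(v 0).toNat, (v 1).toNat, (v 2).toNat, (v 3).toNat, (v 5).toNat,
        (v 7).toNat, 0, (v 6 - v 3).toNat], ?_⟩
      funext i
      fin_cases i <;>
        simp [fund, Fin.sum_univ_succ, Int.toNat_of_nonneg, hv, my_cons_9_4, my_cons_9_5, my_cons_9_6, my_cons_9_7, my_cons_9_8, my_cons_8_4, my_cons_8_5, my_cons_8_6, my_cons_8_7,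
          Int.toNat_of_nonneg (sub_nonneg.mpr hd)] <;> omega
end

section
/- For t ∈ Λ ∩ C_TM with c(t) ≠ 0, if any of the six coordinates ℓ₁, ℓ₂, m₁, m₂, n₁, n₂ of t equals 0, then c(t) = 1. -/
set_option maxHeartbeats 2000000 in
theorem stmt14 (t : Fin 6 → ℤ) (hΛ : inLattice t)
    (hC : ∀ (i : Fin 3) (j : Fin 6), g j (toQ t) ≤ f i (toQ t))
    (hc : c t ≠ 0) (h0 : ∃ i : Fin 6, t i = 0) :
    c t = 1 := by
  have hsub : Subsingleton {T : Fin 9 → ℤ // IsBZ T ∧ pr T = t} := by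
    constructor
    rintro ⟨T, ⟨hTn, hT1, hT2⟩, hpT⟩ ⟨S, ⟨hSn, hS1, hS2⟩, hpS⟩
    have eT0 : T 1 + T 6 = t 0 := by simpa [pr] using congrFun hpT 0
    have eT1 : T 2 + T 7 = t 1 := by simpa [pr] using congrFun hpT 1
    have eT2 : T 2 + T 8 = t 2 := by simpa [pr] using congrFun hpT 2
    have eT3 : T 0 + T 3 = t 3 := by simpa [pr] using congrFun hpT 3
    have eT4 : T 0 + T 4 = t 4 := by simpa [pr] using congrFun hpT 4
    have eT5 : T 1 + T 5 = t 5 := by simpa [pr] using congrFun hpT 5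
    have eS0 : S 1 + S 6 = t 0 := by simpa [pr] using congrFun hpS 0
    have eS1 : S 2 + S 7 = t 1 := by simpa [pr] using congrFun hpS 1
    have eS2 : S 2 + S 8 = t 2 := by simpa [pr] using congrFun hpS 2
    have eS3 : S 0 + S 3 = t 3 := by simpa [pr] using congrFun hpS 3
    have eS4 : S 0 + S 4 = t 4 := by simpa [pr] using congrFun hpS 4
    have eS5 : S 1 + S 5 = t 5 := by simpa [pr] using congrFun hpS 5
    have hd : T 0 - S 0 = T 1 - S 1 ∧ T 0 - S 0 = T 2 - S 2 ∧
        T 3 - S 3 = S 0 - T 0 ∧ T 4 - S 4 = S 0 - T 0 ∧ T 5 - S 5 = S 0 - T 0 ∧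
        T 6 - S 6 = S 0 - T 0 ∧ T 7 - S 7 = S 0 - T 0 ∧ T 8 - S 8 = S 0 - T 0 := by
      omega
    have nT0 := hTn 0; have nT1 := hTn 1; have nT2 := hTn 2
    have nT3 := hTn 3; have nT4 := hTn 4; have nT5 := hTn 5
    have nT6 := hTn 6; have nT7 := hTn 7; have nT8 := hTn 8
    have nS0 := hSn 0; have nS1 := hSn 1; have nS2 := hSn 2
    have nS3 := hSn 3; have nS4 := hSn 4; have nS5 := hSn 5
    have nS6 := hSn 6; have nS7 := hSn 7; have nS8 := hSn 8
    have hzero : t 0 = 0 ∨ t 1 = 0 ∨ t 2 = 0 ∨ t 3 = 0 ∨ t 4 = 0 ∨ t 5 = 0 := by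
      obtain ⟨i, hi⟩ := h0
      fin_cases i
      · exact Or.inl hi
      · exact Or.inr (Or.inl hi)
      · exact Or.inr (Or.inr (Or.inl hi))
      · exact Or.inr (Or.inr (Or.inr (Or.inl hi)))
      · exact Or.inr (Or.inr (Or.inr (Or.inr (Or.inl hi))))
      · exact Or.inr (Or.inr (Or.inr (Or.inr (Or.inr hi))))
    obtain ⟨d1, d2, d3, d4, d5, d6, d7, d8⟩ := hd
    have h00 : T 0 = S 0 := by
      rcases hzero with h|h|h|h|h|h
      · have : T 1 = 0 ∧ S 1 = 0 := by constructor <;> omega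
        omega
      · have : T 2 = 0 ∧ S 2 = 0 := by constructor <;> omega
        omega
      · have : T 2 = 0 ∧ S 2 = 0 := by constructor <;> omega
        omega
      · have : T 0 = 0 ∧ S 0 = 0 := by constructor <;> omega
        omega
      · have : T 0 = 0 ∧ S 0 = 0 := by constructor <;> omega
        omega
      · have : T 1 = 0 ∧ S 1 = 0 := by constructor <;> omega
        omega
    have key : T 0 = S 0 ∧ T 1 = S 1 ∧ T 2 = S 2 ∧ T 3 = S 3 ∧ T 4 = S 4 ∧
        T 5 = S 5 ∧ T 6 = S 6 ∧ T 7 = S 7 ∧ T 8 = S 8 := by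
      omega
    obtain ⟨k0, k1, k2, k3, k4, k5, k6, k7, k8⟩ := key
    apply Subtype.ext
    funext j
    fin_cases j <;> simp only [Fin.isValue] <;> assumption
  rw [c, Nat.card_eq_one_iff_unique]
  refine ⟨hsub, ?_⟩
  by_contra hne
  rw [not_nonempty_iff] at hne
  exact hc (by simp [c, Nat.card_of_isEmpty])
end
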